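/- Let Ω′ ⊆ ℝ² be a bounded open set and let v : Ω′ → ℝ² be Lipschitz. Then sup { ∫_{Ω′} [ φ₀(x, v(x)) + Σ_{i,j=1}^{2} φ_{ij}(x, v(x)) ∂_i v_j(x) ] dx } = ∫_{Ω′} √(1 + |∇v(x)|²) dx, where the supremum is taken over all smooth compactly supported maps φ = (φ₀, (φ_{ij})_{i,j=1,2}) : Ω′ × ℝ² → ℝ⁵ satisfying |φ(x, y)| ≤ 1 (Euclidean norm in ℝ⁵) for all (x, y) ∈ Ω′ × ℝ². -/

import Mathlib

open MeasureTheory Filter Metric Topology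
open scoped ENNReal NNReal

noncomputable section

abbrev V2 : Type := EuclideanSpace ℝ (Fin 2)

/-- Squared Frobenius norm of (the matrix of) a continuous linear map on `ℝ²`. -/
def frobSq (L : V2 →L[ℝ] V2) : ℝ :=
  ∑ i : Fin 2, ∑ j : Fin 2, (L (EuclideanSpace.single j 1) i) ^ 2

/-- Determinant of (the matrix of) a continuous linear map on `ℝ²`. -/
def detJ (L : V2 →L[ℝ] V2) : ℝ :=
  L (EuclideanSpace.single 0 1) 0 * L (EuclideanSpace.single 1 1) 1 -
    L (EuclideanSpace.single 1 1) 0 * L (EuclideanSpace.single 0 1) 1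

/-- The vortex map `x ↦ x / |x|` (equal to `0` at the origin). -/
def vortex (x : V2) : V2 := ‖x‖⁻¹ • x

/-- The area integrand `√(1 + |∇v|² + (det ∇v)²)`. -/
def areaIntegrand (v : V2 → V2) (x : V2) : ℝ :=
  Real.sqrt (1 + frobSq (fderiv ℝ v x) + detJ (fderiv ℝ v x) ^ 2)

/-- Area of the graph of `v` over the set `E`. -/
def graphArea (v : V2 → V2) (E : Set V2) : ℝ≥0∞ :=
  ∫⁻ x in E, ENNReal.ofReal (areaIntegrand v x)

/-- `∫_{B_l} √(1 + |∇u|²) dx` for the vortex map `u`. -/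
def vortexGradArea (l : ℝ) : ℝ≥0∞ :=
  ∫⁻ x in ball (0 : V2) l, ENNReal.ofReal (Real.sqrt (1 + frobSq (fderiv ℝ vortex x)))

/-- The `L¹`-relaxed area of the graph of the vortex map over `B_l`:
the infimum of `liminf_k 𝒜(v_k, B_l)` over all sequences `(v_k)` of maps that are
`C¹` on `B_l` and converge to the vortex map in `L¹(B_l, ℝ²)`. -/
def relaxedArea (l : ℝ) : ℝ≥0∞ :=
  sInf { a : ℝ≥0∞ | ∃ v : ℕ → V2 → V2,
    (∀ k, ContDiffOn ℝ 1 (v k) (ball (0 : V2) l)) ∧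
    Tendsto (fun k => ∫⁻ x in ball (0 : V2) l, ENNReal.ofReal ‖v k x - vortex x‖)
      atTop (𝓝 0) ∧
    a = Filter.liminf (fun k => graphArea (v k) (ball (0 : V2) l)) atTop }


open Set Function
open scoped Manifold Convolution Pointwise
set_option maxHeartbeats 1000000

abbrev I5 : Type := Unit ⊕ Fin 2 × Fin 2
abbrev W5 : Type := EuclideanSpace ℝ I5

def gvec (v : V2 → V2) (x : V2) : W5 :=
  (WithLp.equiv 2 _).symm
    (Sum.elim (fun _ => (1:ℝ)) (fun ij => fderiv ℝ v x (EuclideanSpace.single ij.1 1) ij.2))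

lemma euclid_norm_eq {n : Type*} [Fintype n] (w : EuclideanSpace ℝ n) :
    ‖w‖ = Real.sqrt (∑ k, (w k)^2) := by
  rw [EuclideanSpace.norm_eq]; congr 1
  exact Finset.sum_congr rfl fun k _ => by rw [Real.norm_eq_abs, sq_abs]

lemma euclid_coord_le {n : Type*} [Fintype n] (w : EuclideanSpace ℝ n) (k : n) :
    |w k| ≤ ‖w‖ := by
  rw [euclid_norm_eq, ← Real.sqrt_sq_eq_abs]
  exact Real.sqrt_le_sqrt (Finset.single_le_sum (f := fun k => (w k)^2)
    (fun i _ => sq_nonneg _) (Finset.mem_univ k))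

lemma frobSq_nonneg (L : V2 →L[ℝ] V2) : 0 ≤ frobSq L :=
  Finset.sum_nonneg fun i _ => Finset.sum_nonneg fun j _ => sq_nonneg _

lemma frobSq_le (L : V2 →L[ℝ] V2) : frobSq L ≤ 4 * ‖L‖^2 := by
  have h : ∀ i j : Fin 2, (L (EuclideanSpace.single j 1) i)^2 ≤ ‖L‖^2 := by
    intro i j
    have h1 : |L (EuclideanSpace.single j 1) i| ≤ ‖L (EuclideanSpace.single j 1)‖ :=
      euclid_coord_le _ _
    have h2 : ‖L (EuclideanSpace.single j 1)‖ ≤ ‖L‖ := by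
      calc ‖L (EuclideanSpace.single j 1)‖ ≤ ‖L‖ * ‖(EuclideanSpace.single j 1 : V2)‖ :=
            L.le_opNorm _
        _ = ‖L‖ := by rw [EuclideanSpace.norm_single]; simp
    calc (L (EuclideanSpace.single j 1) i)^2 = |L (EuclideanSpace.single j 1) i|^2 := (sq_abs _).symm
      _ ≤ ‖L‖^2 := by apply pow_le_pow_left₀ (abs_nonneg _) (h1.trans h2)
  calc frobSq L ≤ ∑ i : Fin 2, ∑ j : Fin 2, ‖L‖^2 :=
        Finset.sum_le_sum fun i _ => Finset.sum_le_sum fun j _ => h i j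
    _ = 4 * ‖L‖^2 := by simp; ring

lemma norm_gvec (v : V2 → V2) (x : V2) :
    ‖gvec v x‖ = Real.sqrt (1 + frobSq (fderiv ℝ v x)) := by
  rw [euclid_norm_eq]
  congr 1
  rw [Fintype.sum_sum_type]
  have h1 : ∑ k : Unit, (gvec v x (Sum.inl k))^2 = 1 := by simp [gvec]
  rw [h1]
  congr 1
  rw [Fintype.sum_prod_type]
  unfold frobSq
  rw [Finset.sum_comm]
  exact Finset.sum_congr rfl fun j _ => Finset.sum_congr rfl fun i _ => by simp [gvec]

lemma one_le_norm_gvec (v : V2 → V2) (x : V2) : 1 ≤ ‖gvec v x‖ := by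
  rw [norm_gvec]
  have h := frobSq_nonneg (fderiv ℝ v x)
  nlinarith [Real.sq_sqrt (show (0:ℝ) ≤ 1 + frobSq (fderiv ℝ v x) by linarith),
    Real.sqrt_nonneg (1 + frobSq (fderiv ℝ v x))]

lemma measurable_gvec (v : V2 → V2) : Measurable (gvec v) := by
  have : Measurable fun x => ((Sum.elim (fun _ => (1:ℝ))
      (fun ij : Fin 2 × Fin 2 => fderiv ℝ v x (EuclideanSpace.single ij.1 1) ij.2)) : I5 → ℝ) := by
    apply measurable_pi_lambda
    rintro (u | ⟨i, j⟩)
    · exact measurable_const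
    · exact ((EuclideanSpace.proj j : V2 →L[ℝ] ℝ).continuous.measurable).comp
        (measurable_fderiv_apply_const ℝ v (EuclideanSpace.single i 1))
  exact ((PiLp.continuousLinearEquiv 2 ℝ (fun _ : I5 => ℝ)).symm.continuous.measurable).comp this

section
variable {Ω' : Set V2} {v : V2 → V2} {K : ℝ≥0}

lemma norm_fderiv_lip (hopen : IsOpen Ω') (hv : LipschitzOnWith K v Ω') : ∀ x ∈ Ω', ‖fderiv ℝ v x‖ ≤ K := fun x hx =>
  norm_fderiv_le_of_lipschitzOn ℝ (hopen.mem_nhds hx) hv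

lemma gvec_le_M (hopen : IsOpen Ω') (hv : LipschitzOnWith K v Ω') : ∀ x ∈ Ω', ‖gvec v x‖ ≤ Real.sqrt (1 + 4 * (K:ℝ)^2) := by
  intro x hx
  rw [norm_gvec]
  apply Real.sqrt_le_sqrt
  have h1 := frobSq_le (fderiv ℝ v x)
  have h2 := norm_fderiv_lip hopen hv x hx
  have h3 : ‖fderiv ℝ v x‖^2 ≤ (K:ℝ)^2 := pow_le_pow_left₀ (norm_nonneg _) h2 2
  have h4 : (0:ℝ) ≤ 4 := by norm_num
  nlinarith

lemma integrableOn_norm_gvec (hopen : IsOpen Ω') (hbdd : Bornology.IsBounded Ω') (hv : LipschitzOnWith K v Ω') : IntegrableOn (fun x => ‖gvec v x‖) Ω' := by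
  have hfin : volume Ω' < ∞ := hbdd.measure_lt_top
  apply Integrable.mono' ((integrableOn_const_iff (C := Real.sqrt (1 + 4 * (K:ℝ)^2))).2 (Or.inr hfin))
  · exact ((measurable_gvec v).norm.aestronglyMeasurable)
  · filter_upwards [ae_restrict_mem hopen.measurableSet] with x hx
    rw [Real.norm_eq_abs, abs_of_nonneg (norm_nonneg _)]
    exact gvec_le_M hopen hv x hx

/-- pointwise Cauchy-Schwarz -/
lemma pointwise_CS (v : V2 → V2) (φ₀ : V2 × V2 → ℝ) (φm : Fin 2 → Fin 2 → V2 × V2 → ℝ)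
    (hle : ∀ p : V2 × V2, (φ₀ p) ^ 2 + ∑ i : Fin 2, ∑ j : Fin 2, (φm i j p) ^ 2 ≤ 1)
    (x : V2) :
    φ₀ (x, v x) + ∑ i : Fin 2, ∑ j : Fin 2,
        φm i j (x, v x) * fderiv ℝ v x (EuclideanSpace.single i 1) j ≤ ‖gvec v x‖ := by
  set p : W5 := (WithLp.equiv 2 _).symm
    (Sum.elim (fun _ => φ₀ (x, v x)) (fun ij => φm ij.1 ij.2 (x, v x))) with hp
  have hinner : (inner ℝ p (gvec v x) : ℝ) = φ₀ (x, v x) + ∑ i : Fin 2, ∑ j : Fin 2,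
      φm i j (x, v x) * fderiv ℝ v x (EuclideanSpace.single i 1) j := by
    simp only [PiLp.inner_apply, RCLike.inner_apply, starRingEnd_apply, star_trivial]
    rw [Fintype.sum_sum_type, Fintype.sum_prod_type]
    simp [hp, gvec]; ring
  have hnormp : ‖p‖ ≤ 1 := by
    rw [euclid_norm_eq, show (1:ℝ) = Real.sqrt 1 by simp]
    apply Real.sqrt_le_sqrt
    have := hle (x, v x)
    calc ∑ k : I5, (p k)^2
        = (φ₀ (x, v x))^2 + ∑ i : Fin 2, ∑ j : Fin 2, (φm i j (x, v x))^2 := by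
          rw [Fintype.sum_sum_type, Fintype.sum_prod_type]; simp [hp]
      _ ≤ 1 := this
  calc φ₀ (x, v x) + ∑ i : Fin 2, ∑ j : Fin 2,
        φm i j (x, v x) * fderiv ℝ v x (EuclideanSpace.single i 1) j
      = inner ℝ p (gvec v x) := hinner.symm
    _ ≤ ‖p‖ * ‖gvec v x‖ := real_inner_le_norm _ _
    _ ≤ 1 * ‖gvec v x‖ := by
        apply mul_le_mul_of_nonneg_right hnormp (norm_nonneg _)
    _ = ‖gvec v x‖ := one_mul _
end

theorem exists_testfield {Ω' : Set V2} (hopen : IsOpen Ω') (hbdd : Bornology.IsBounded Ω')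
    {v : V2 → V2} {K : ℝ≥0} (hv : LipschitzOnWith K v Ω') {ε : ℝ} (hε : 0 < ε) :
    ∃ Φ : V2 → W5, ContDiff ℝ (⊤:ℕ∞) Φ ∧ HasCompactSupport Φ ∧ tsupport Φ ⊆ Ω' ∧
      (∀ x, ‖Φ x‖ ≤ 1) ∧
      (∫ x in Ω', ‖gvec v x‖) - ε ≤ ∫ x in Ω', (inner ℝ (Φ x) (gvec v x) : ℝ) := by
  classical
  set M : ℝ := Real.sqrt (1 + 4 * (K:ℝ)^2) with hM
  have hM1 : 1 ≤ M := by
    rw [hM]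
    nlinarith [Real.sq_sqrt (show (0:ℝ) ≤ 1 + 4*(K:ℝ)^2 by positivity),
      Real.sqrt_nonneg (1 + 4*(K:ℝ)^2), sq_nonneg (K:ℝ)]
  have hM0 : 0 < M := lt_of_lt_of_le one_pos hM1
  have hfin : volume Ω' < ∞ := hbdd.measure_lt_top
  set δ0 : ℝ := ε / (2 * (M + 1)) with hδ0
  have hδ0pos : 0 < δ0 := by positivity
  -- compact K₀ inside Ω'
  obtain ⟨K₀, hK₀Ω, hK₀c, hK₀m⟩ := hopen.measurableSet.exists_isCompact_diff_lt hfin.ne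
    (ε := ENNReal.ofReal δ0) (by simp [hδ0pos])
  -- compact L between
  obtain ⟨L, hLc, hK₀L, hLΩ⟩ := exists_compact_between hK₀c hopen hK₀Ω
  -- smooth cutoff
  obtain ⟨ψf, hψ0, hψ1, hψicc⟩ := exists_contMDiffMap_zero_one_of_isClosed 𝓘(ℝ, V2) (n := (⊤ : ℕ∞))
    (isOpen_interior.isClosed_compl) (hK₀c.isClosed) (by
      rw [Set.disjoint_compl_left_iff_subset]; exact hK₀L)
  set ψ : V2 → ℝ := fun x => ψf x with hψdef
  have hψsmooth : ContDiff ℝ (⊤:ℕ∞) ψ := (contMDiff_iff_contDiff).1 ψf.contMDiff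
  have hψ01 : ∀ x, ψ x ∈ Icc (0:ℝ) 1 := hψicc
  have hψsupp : support ψ ⊆ interior L := by
    intro x hx
    by_contra hxL
    exact hx (hψ0 hxL)
  -- the target field
  set h : V2 → W5 := fun x => ‖gvec v x‖⁻¹ • gvec v x with hh
  set w : V2 → W5 := fun x => ψ x • h x with hwdef
  have hgnorm_pos : ∀ x, 0 < ‖gvec v x‖ := fun x => lt_of_lt_of_le one_pos (one_le_norm_gvec v x)
  have hh_norm : ∀ x, ‖h x‖ ≤ 1 := by
    intro x
    rw [hh]
    simp only [norm_smul, norm_inv, norm_norm]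
    rw [inv_mul_cancel₀ (hgnorm_pos x).ne']
  have hw_norm : ∀ x, ‖w x‖ ≤ 1 := by
    intro x
    rw [hwdef]
    simp only [norm_smul, Real.norm_eq_abs]
    calc |ψ x| * ‖h x‖ ≤ 1 * 1 := by
          apply mul_le_mul _ (hh_norm x) (norm_nonneg _) zero_le_one
          rw [abs_of_nonneg (hψ01 x).1]; exact (hψ01 x).2
      _ = 1 := by ring
  have hw_meas : Measurable w := by
    apply Measurable.fun_smul
    · exact hψsmooth.continuous.measurable
    · exact ((measurable_gvec v).norm.inv).smul (measurable_gvec v)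
  have hw_supp : support w ⊆ interior L := by
    intro x hx
    apply hψsupp
    intro hψx
    apply hx
    rw [hwdef]; simp [hψx]
  have hw_int : Integrable w := by
    apply Integrable.mono' ((integrable_indicator_iff hLc.measurableSet).2
      ((integrableOn_const_iff (C := (1:ℝ))).2 (Or.inr hLc.measure_lt_top)))
    · exact hw_meas.aestronglyMeasurable
    · filter_upwards with x
      by_cases hx : x ∈ L
      · rw [Set.indicator_of_mem hx]; exact hw_norm x
      · rw [Set.indicator_of_notMem hx]
        have : w x = 0 := by
          by_contra hne
          exact hx (interior_subset (hw_supp hne))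
        simp [this]
  -- thickening margin
  obtain ⟨δL, hδLpos, hδLsub⟩ := hLc.exists_thickening_subset_open hopen hLΩ
  -- bump functions
  set φb : ℕ → ContDiffBump (0 : V2) := fun n =>
    ⟨((n:ℝ)+2)⁻¹, 2*((n:ℝ)+2)⁻¹, by positivity, by
      have : (0:ℝ) < ((n:ℝ)+2)⁻¹ := by positivity
      linarith⟩ with hφb
  set Φs : ℕ → V2 → W5 := fun n =>
    (φb n).normed volume ⋆[ContinuousLinearMap.lsmul ℝ ℝ, volume] w with hΦs
  have hΦsmooth : ∀ n, ContDiff ℝ (⊤:ℕ∞) (Φs n) := fun n =>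
    HasCompactSupport.contDiff_convolution_left _ (φb n).hasCompactSupport_normed
      (φb n).contDiff_normed hw_int.locallyIntegrable
  have hΦnorm : ∀ n x, ‖Φs n x‖ ≤ 1 := by
    intro n x
    rw [hΦs]
    simp only [convolution_def, ContinuousLinearMap.lsmul_apply]
    calc ‖∫ t, ((φb n).normed volume t) • w (x - t)‖
        ≤ ∫ t, ‖((φb n).normed volume t) • w (x - t)‖ := norm_integral_le_integral_norm _
      _ ≤ ∫ t, (φb n).normed volume t := by
          apply integral_mono_of_nonneg
          · filter_upwards with t; exact norm_nonneg _
          · exact (φb n).integrable_normed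
          · filter_upwards with t
            rw [norm_smul, Real.norm_eq_abs, abs_of_nonneg ((φb n).nonneg_normed (μ := volume) t)]
            nlinarith [hw_norm (x - t), (φb n).nonneg_normed (μ := volume) t, norm_nonneg (w (x-t))]
      _ = 1 := (φb n).integral_normed
  have hΦsupp : ∀ n, tsupport (Φs n) ⊆ cthickening (2*((n:ℝ)+2)⁻¹) L := by
    intro n
    have h1 : support (Φs n) ⊆ ball (0:V2) (2*((n:ℝ)+2)⁻¹) + interior L := by
      rw [hΦs]
      refine subset_trans (support_convolution_subset (ContinuousLinearMap.lsmul ℝ ℝ)) ?_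
      apply Set.add_subset_add _ hw_supp
      rw [(φb n).support_normed_eq]
    have h2 : ball (0:V2) (2*((n:ℝ)+2)⁻¹) + interior L ⊆ thickening (2*((n:ℝ)+2)⁻¹) L := by
      rintro z ⟨b, hb, y, hy, rfl⟩
      rw [Metric.mem_thickening_iff]
      refine ⟨y, interior_subset hy, ?_⟩
      rw [dist_eq_norm]
      simpa using (mem_ball_zero_iff.1 hb)
    apply closure_minimal (h1.trans (h2.trans (Metric.thickening_subset_cthickening _ _)))
      Metric.isClosed_cthickening
  have hΦcompact : ∀ n, HasCompactSupport (Φs n) := fun n =>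
    IsCompact.of_isClosed_subset (hLc.cthickening) (isClosed_tsupport _) (hΦsupp n)
  have hrout : Tendsto (fun n : ℕ => 2*((n:ℝ)+2)⁻¹) atTop (𝓝 0) := by
    have h1 : Tendsto (fun n : ℕ => ((n:ℝ)+2)) atTop atTop :=
      tendsto_atTop_add_const_right _ 2 tendsto_natCast_atTop_atTop
    have h2 := (tendsto_inv_atTop_zero).comp h1
    have := h2.const_mul (2:ℝ)
    simpa using this
  have hae : ∀ᵐ x₀, Tendsto (fun n => Φs n x₀) atTop (𝓝 (w x₀)) := by
    apply ContDiffBump.ae_convolution_tendsto_right_of_locallyIntegrable (K := 2) hrout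
      _ hw_int.locallyIntegrable
    filter_upwards with n
    exact le_of_eq rfl
  -- dominated convergence for the pairing
  set F : ℕ → ℝ := fun n => ∫ x in Ω', (inner ℝ (Φs n x) (gvec v x) : ℝ) with hF
  have hFlim : Tendsto F atTop (𝓝 (∫ x in Ω', (inner ℝ (w x) (gvec v x) : ℝ))) := by
    apply tendsto_integral_of_dominated_convergence (bound := fun _ => M)
    · intro n
      exact (((hΦsmooth n).continuous.measurable).inner (measurable_gvec v)).aestronglyMeasurable
    · exact (integrableOn_const_iff (C := M)).2 (Or.inr hfin)
    · intro n
      filter_upwards [ae_restrict_mem hopen.measurableSet] with x hx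
      rw [Real.norm_eq_abs]
      calc |(inner ℝ (Φs n x) (gvec v x) : ℝ)| ≤ ‖Φs n x‖ * ‖gvec v x‖ := abs_real_inner_le_norm _ _
        _ ≤ 1 * M := mul_le_mul (hΦnorm n x) (gvec_le_M hopen hv x hx) (norm_nonneg _) zero_le_one
        _ = M := one_mul _
    · filter_upwards [ae_restrict_of_ae hae] with x hx
      exact hx.inner tendsto_const_nhds
  have hinner_w : ∀ x, (inner ℝ (w x) (gvec v x) : ℝ) = ψ x * ‖gvec v x‖ := by
    intro x
    rw [hwdef]
    simp only [hh]
    rw [real_inner_smul_left, real_inner_smul_left, real_inner_self_eq_norm_mul_norm]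
    have := (hgnorm_pos x).ne'
    field_simp
  -- integrability
  have hImeas : Measurable fun x => ‖gvec v x‖ := (measurable_gvec v).norm
  have hint_g : IntegrableOn (fun x => ‖gvec v x‖) Ω' := integrableOn_norm_gvec hopen hbdd hv
  have hint_ψg : IntegrableOn (fun x => ψ x * ‖gvec v x‖) Ω' := by
    apply Integrable.mono' ((integrableOn_const_iff (C := M)).2 (Or.inr hfin))
    · exact (hψsmooth.continuous.measurable.mul hImeas).aestronglyMeasurable
    · filter_upwards [ae_restrict_mem hopen.measurableSet] with x hx
      rw [Real.norm_eq_abs, abs_mul, abs_of_nonneg (hψ01 x).1,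
        abs_of_nonneg (norm_nonneg _)]
      calc ψ x * ‖gvec v x‖ ≤ 1 * M :=
            mul_le_mul (hψ01 x).2 (gvec_le_M hopen hv x hx) (norm_nonneg _) zero_le_one
        _ = M := one_mul _
  -- the error estimate
  have herr : (∫ x in Ω', ‖gvec v x‖) - (∫ x in Ω', ψ x * ‖gvec v x‖) ≤ M * δ0 := by
    have hsub : (∫ x in Ω', ‖gvec v x‖) - (∫ x in Ω', ψ x * ‖gvec v x‖)
        = ∫ x in Ω', (1 - ψ x) * ‖gvec v x‖ := by
      rw [← integral_sub hint_g hint_ψg]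
      congr 1; funext x; ring
    rw [hsub]
    have hqint : IntegrableOn (fun x => (1 - ψ x) * ‖gvec v x‖) Ω' := by
      have : (fun x => (1 - ψ x) * ‖gvec v x‖)
          = fun x => ‖gvec v x‖ - ψ x * ‖gvec v x‖ := by funext x; ring
      rw [this]
      exact hint_g.sub hint_ψg
    have hunion : (Ω' \ K₀) ∪ K₀ = Ω' := Set.diff_union_of_subset hK₀Ω
    have hsplit : ∫ x in Ω', (1 - ψ x) * ‖gvec v x‖
        = (∫ x in Ω' \ K₀, (1 - ψ x) * ‖gvec v x‖) + ∫ x in K₀, (1 - ψ x) * ‖gvec v x‖ := by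
      have := setIntegral_union (μ := volume) (f := fun x => (1 - ψ x) * ‖gvec v x‖)
        (disjoint_sdiff_left) hK₀c.measurableSet
        (hqint.mono_set Set.diff_subset) (hqint.mono_set hK₀Ω)
      rw [hunion] at this
      exact this
    have hK₀zero : ∫ x in K₀, (1 - ψ x) * ‖gvec v x‖ = 0 := by
      have : EqOn (fun x => (1 - ψ x) * ‖gvec v x‖) 0 K₀ := by
        intro x hx
        have : ψ x = 1 := hψ1 hx
        simp [this]
      rw [setIntegral_congr_fun hK₀c.measurableSet this]; simp
    have hdiffbd : ∫ x in Ω' \ K₀, (1 - ψ x) * ‖gvec v x‖ ≤ M * δ0 := by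
      have hμ : volume (Ω' \ K₀) < ∞ := lt_of_le_of_lt (measure_mono Set.diff_subset) hfin
      have hC : ∀ x ∈ Ω' \ K₀, ‖(1 - ψ x) * ‖gvec v x‖‖ ≤ M := by
        intro x hx
        rw [Real.norm_eq_abs, abs_mul, abs_of_nonneg (norm_nonneg _)]
        have h1 : |1 - ψ x| ≤ 1 := by
          rw [abs_le]; constructor <;> [linarith [(hψ01 x).2]; linarith [(hψ01 x).1]]
        calc |1 - ψ x| * ‖gvec v x‖ ≤ 1 * M :=
              mul_le_mul h1 (gvec_le_M hopen hv x hx.1) (norm_nonneg _) zero_le_one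
          _ = M := one_mul _
      calc ∫ x in Ω' \ K₀, (1 - ψ x) * ‖gvec v x‖
          ≤ ‖∫ x in Ω' \ K₀, (1 - ψ x) * ‖gvec v x‖‖ := le_abs_self _
        _ ≤ M * (volume (Ω' \ K₀)).toReal := by
            have := norm_setIntegral_le_of_norm_le_const hμ hC; exact this
        _ ≤ M * δ0 := by
            apply mul_le_mul_of_nonneg_left _ hM0.le
            exact ENNReal.toReal_le_of_le_ofReal hδ0pos.le hK₀m.le
    rw [hsplit, hK₀zero, add_zero]
    exact hdiffbd
  have hMδ : M * δ0 ≤ ε / 2 := by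
    have h1 : (0:ℝ) < 2*(M+1) := by positivity
    have h2 : M * (ε / (2 * (M + 1))) = (M * ε) / (2 * (M+1)) := by ring
    rw [hδ0, h2, div_le_div_iff₀ h1 two_pos]
    nlinarith [hM0.le, hε.le]
  -- choose n
  have h1 : ∀ᶠ n in atTop, (∫ x in Ω', (inner ℝ (w x) (gvec v x) : ℝ)) - ε/2 < F n :=
    hFlim.eventually (eventually_gt_nhds (by linarith))
  have h2 : ∀ᶠ (n : ℕ) in atTop, 2*((n:ℝ)+2)⁻¹ < δL :=
    hrout.eventually (eventually_lt_nhds hδLpos)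
  obtain ⟨n, hn1, hn2⟩ := (h1.and h2).exists
  refine ⟨Φs n, hΦsmooth n, hΦcompact n, ?_, hΦnorm n, ?_⟩
  · exact (hΦsupp n).trans ((Metric.cthickening_subset_thickening' hδLpos hn2 L).trans hδLsub)
  · have hwg : (∫ x in Ω', (inner ℝ (w x) (gvec v x) : ℝ)) = ∫ x in Ω', ψ x * ‖gvec v x‖ := by
      apply integral_congr_ae
      filter_upwards with x
      exact hinner_w x
    have : (∫ x in Ω', ‖gvec v x‖) - ε ≤ (∫ x in Ω', (inner ℝ (w x) (gvec v x) : ℝ)) - ε/2 := by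
      rw [hwg]; linarith
    exact this.trans hn1.le

/-- Duality formula for the mass of the current carried by the graph of a Lipschitz map
`v` on a bounded open set `Ω′ ⊆ ℝ²`: the supremum over all smooth compactly supported
test maps `φ = (φ₀, (φ_{ij}))` into `ℝ⁵` with `|φ| ≤ 1`, of
`∫_{Ω′} (φ₀(x, v(x)) + Σ_{ij} φ_{ij}(x, v(x)) ∂_i v_j(x)) dx`,
equals `∫_{Ω′} √(1 + |∇v|²) dx`. -/
theorem mass_of_graph_current (Ω' : Set V2) (hopen : IsOpen Ω')
    (hbdd : Bornology.IsBounded Ω') (v : V2 → V2) (K : ℝ≥0)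
    (hv : LipschitzOnWith K v Ω') :
    sSup { a : ℝ | ∃ (φ₀ : V2 × V2 → ℝ) (φm : Fin 2 → Fin 2 → V2 × V2 → ℝ),
      ContDiff ℝ (⊤ : ℕ∞) φ₀ ∧ (∀ i j, ContDiff ℝ (⊤ : ℕ∞) (φm i j)) ∧
      HasCompactSupport φ₀ ∧ (∀ i j, HasCompactSupport (φm i j)) ∧
      tsupport φ₀ ⊆ Ω' ×ˢ (Set.univ : Set V2) ∧
      (∀ i j, tsupport (φm i j) ⊆ Ω' ×ˢ (Set.univ : Set V2)) ∧
      (∀ p : V2 × V2, (φ₀ p) ^ 2 + ∑ i : Fin 2, ∑ j : Fin 2, (φm i j p) ^ 2 ≤ 1) ∧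
      a = ∫ x in Ω', (φ₀ (x, v x) + ∑ i : Fin 2, ∑ j : Fin 2,
            φm i j (x, v x) * fderiv ℝ v x (EuclideanSpace.single i 1) j) }
    = ∫ x in Ω', Real.sqrt (1 + frobSq (fderiv ℝ v x)) := by
  classical
  set S := { a : ℝ | ∃ (φ₀ : V2 × V2 → ℝ) (φm : Fin 2 → Fin 2 → V2 × V2 → ℝ),
      ContDiff ℝ (⊤ : ℕ∞) φ₀ ∧ (∀ i j, ContDiff ℝ (⊤ : ℕ∞) (φm i j)) ∧
      HasCompactSupport φ₀ ∧ (∀ i j, HasCompactSupport (φm i j)) ∧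
      tsupport φ₀ ⊆ Ω' ×ˢ (Set.univ : Set V2) ∧
      (∀ i j, tsupport (φm i j) ⊆ Ω' ×ˢ (Set.univ : Set V2)) ∧
      (∀ p : V2 × V2, (φ₀ p) ^ 2 + ∑ i : Fin 2, ∑ j : Fin 2, (φm i j p) ^ 2 ≤ 1) ∧
      a = ∫ x in Ω', (φ₀ (x, v x) + ∑ i : Fin 2, ∑ j : Fin 2,
            φm i j (x, v x) * fderiv ℝ v x (EuclideanSpace.single i 1) j) } with hS
  have hIg : (∫ x in Ω', Real.sqrt (1 + frobSq (fderiv ℝ v x))) = ∫ x in Ω', ‖gvec v x‖ := by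
    apply integral_congr_ae
    filter_upwards with x
    exact (norm_gvec v x).symm
  set M : ℝ := Real.sqrt (1 + 4 * (K:ℝ)^2) with hM
  have hfin : volume Ω' < ∞ := hbdd.measure_lt_top
  have hpair : ContinuousOn (fun x : V2 => (x, v x)) Ω' :=
    continuousOn_id.prodMk hv.continuousOn
  have hDmeas : ∀ i j : Fin 2, Measurable fun x =>
      fderiv ℝ v x (EuclideanSpace.single i 1) j := fun i j =>
    ((EuclideanSpace.proj j : V2 →L[ℝ] ℝ).continuous.measurable).comp
      (measurable_fderiv_apply_const ℝ v (EuclideanSpace.single i 1))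
  -- upper bound
  have hub : ∀ a ∈ S, a ≤ ∫ x in Ω', Real.sqrt (1 + frobSq (fderiv ℝ v x)) := by
    rintro a ⟨φ₀, φm, hs0, hsm, hc0, hcm, ht0, htm, hle, rfl⟩
    rw [hIg]
    have hint_f : IntegrableOn (fun x => φ₀ (x, v x) + ∑ i : Fin 2, ∑ j : Fin 2,
        φm i j (x, v x) * fderiv ℝ v x (EuclideanSpace.single i 1) j) Ω' := by
      apply Integrable.mono' ((integrableOn_const_iff (C := M)).2 (Or.inr hfin))
      · apply AEStronglyMeasurable.add
        · exact (hs0.continuous.comp_continuousOn hpair).aestronglyMeasurable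
            hopen.measurableSet
        · apply Finset.aestronglyMeasurable_fun_sum
          intro i _
          apply Finset.aestronglyMeasurable_fun_sum
          intro j _
          exact (((hsm i j).continuous.comp_continuousOn hpair).aestronglyMeasurable
            hopen.measurableSet).mul ((hDmeas i j).aestronglyMeasurable)
      · filter_upwards [ae_restrict_mem hopen.measurableSet] with x hx
        rw [Real.norm_eq_abs, abs_le]
        constructor
        · have := pointwise_CS v (fun p => - φ₀ p) (fun i j p => - φm i j p)
            (fun p => by simpa using hle p) x
          simp only [neg_mul, Finset.sum_neg_distrib, ← neg_add] at this
          have h2 := (gvec_le_M hopen hv x hx)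
          linarith
        · exact (pointwise_CS v φ₀ φm hle x).trans (gvec_le_M hopen hv x hx)
    apply setIntegral_mono_on hint_f (integrableOn_norm_gvec hopen hbdd hv)
      hopen.measurableSet
    intro x hx
    exact pointwise_CS v φ₀ φm hle x
  have h0mem : (0:ℝ) ∈ S := by
    refine ⟨(fun _ => 0), (fun _ _ _ => 0), contDiff_const, fun i j => contDiff_const,
      ?_, fun i j => ?_, ?_, fun i j => ?_, fun p => by norm_num, by simp⟩
    · simp [HasCompactSupport, tsupport]
    · simp [HasCompactSupport, tsupport]
    · simp [tsupport]
    · simp [tsupport]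
  have hbddS : BddAbove S := ⟨_, hub⟩
  apply le_antisymm (csSup_le ⟨0, h0mem⟩ hub)
  -- lower bound
  apply le_of_forall_pos_le_add
  intro ε hε
  obtain ⟨Φ, hΦsmooth, hΦc, hΦsupp, hΦnorm, hΦint⟩ := exists_testfield hopen hbdd hv hε
  -- bound for the image of v
  have himg : Bornology.IsBounded (v '' Ω') := by
    rcases Set.eq_empty_or_nonempty Ω' with h | ⟨x₀, hx₀⟩
    · simp [h]
    · obtain ⟨r, hr⟩ := hbdd.subset_closedBall x₀
      apply Bornology.IsBounded.subset (isBounded_closedBall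
        (x := v x₀) (r := (K:ℝ) * r))
      rintro y ⟨x, hx, rfl⟩
      rw [mem_closedBall]
      calc dist (v x) (v x₀) ≤ K * dist x x₀ := hv.dist_le_mul x hx x₀ hx₀
        _ ≤ K * r := by
            apply mul_le_mul_of_nonneg_left _ K.coe_nonneg
            exact mem_closedBall.1 (hr hx)
  obtain ⟨R, hR⟩ := himg.subset_closedBall 0
  set R' : ℝ := max R 0 with hR'
  set χb : ContDiffBump (0:V2) := ⟨R'+1, R'+2, by positivity, by
    have : (0:ℝ) ≤ R' := le_max_right _ _
    linarith⟩ with hχb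
  have hχ1 : ∀ x ∈ Ω', χb (v x) = 1 := by
    intro x hx
    apply χb.one_of_mem_closedBall
    have : v x ∈ closedBall (0:V2) R := hR ⟨x, hx, rfl⟩
    have h1 : R ≤ R' + 1 := by rw [hR']; have := le_max_left R 0; linarith
    exact closedBall_subset_closedBall h1 this
  -- the test functions
  set φ₀ : V2 × V2 → ℝ := fun p => χb p.2 * Φ p.1 (Sum.inl ()) with hφ₀
  set φm : Fin 2 → Fin 2 → V2 × V2 → ℝ :=
    fun i j p => χb p.2 * Φ p.1 (Sum.inr (i, j)) with hφm
  have hcoord_smooth : ∀ k : I5, ContDiff ℝ (⊤:ℕ∞) fun x : V2 => Φ x k := fun k =>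
    (EuclideanSpace.proj k : W5 →L[ℝ] ℝ).contDiff.comp hΦsmooth
  have hsm' : ∀ k : I5, ContDiff ℝ (⊤:ℕ∞) fun p : V2 × V2 => χb p.2 * Φ p.1 k := fun k =>
    (χb.contDiff.comp contDiff_snd).mul ((hcoord_smooth k).comp contDiff_fst)
  have hsupp' : ∀ k : I5, support (fun p : V2 × V2 => χb p.2 * Φ p.1 k)
      ⊆ tsupport Φ ×ˢ tsupport (χb : V2 → ℝ) := by
    intro k p hp
    simp only [mem_support, mul_ne_zero_iff] at hp
    constructor
    · apply subset_tsupport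
      intro h0
      exact hp.2 (by rw [h0]; rfl)
    · exact subset_tsupport _ hp.1
  have hts' : ∀ k : I5, tsupport (fun p : V2 × V2 => χb p.2 * Φ p.1 k)
      ⊆ tsupport Φ ×ˢ tsupport (χb : V2 → ℝ) := fun k =>
    closure_minimal (hsupp' k) ((isClosed_tsupport _).prod (isClosed_tsupport _))
  have hcs' : ∀ k : I5, HasCompactSupport (fun p : V2 × V2 => χb p.2 * Φ p.1 k) := fun k =>
    IsCompact.of_isClosed_subset (hΦc.prod χb.hasCompactSupport)
      (isClosed_tsupport _) (hts' k)
  have htsΩ : ∀ k : I5, tsupport (fun p : V2 × V2 => χb p.2 * Φ p.1 k)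
      ⊆ Ω' ×ˢ (Set.univ : Set V2) := fun k =>
    (hts' k).trans (Set.prod_mono hΦsupp (Set.subset_univ _))
  have hconstraint : ∀ p : V2 × V2,
      (φ₀ p) ^ 2 + ∑ i : Fin 2, ∑ j : Fin 2, (φm i j p) ^ 2 ≤ 1 := by
    intro p
    have hsum : (φ₀ p) ^ 2 + ∑ i : Fin 2, ∑ j : Fin 2, (φm i j p) ^ 2
        = (χb p.2)^2 * ∑ k : I5, (Φ p.1 k)^2 := by
      simp only [hφ₀, hφm, mul_pow]
      rw [Fintype.sum_sum_type, Fintype.sum_prod_type, mul_add]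
      congr 1
      · simp
      · rw [Finset.mul_sum]
        refine Finset.sum_congr rfl fun i _ => ?_
        rw [Finset.mul_sum]
    rw [hsum]
    have h1 : ∑ k : I5, (Φ p.1 k)^2 ≤ 1 := by
      have := hΦnorm p.1
      have h2 : ‖Φ p.1‖^2 ≤ 1 := by nlinarith [norm_nonneg (Φ p.1)]
      rw [euclid_norm_eq, Real.sq_sqrt (Finset.sum_nonneg fun k _ => sq_nonneg _)] at h2
      exact h2
    have h2 : (χb p.2)^2 ≤ 1 := by
      have ha := χb.nonneg (x := p.2)
      have hb := χb.le_one (x := p.2)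
      nlinarith
    calc (χb p.2)^2 * ∑ k : I5, (Φ p.1 k)^2 ≤ 1 * 1 := by
          apply mul_le_mul h2 h1 (Finset.sum_nonneg fun k _ => sq_nonneg _) zero_le_one
      _ = 1 := by ring
  -- the value
  set a : ℝ := ∫ x in Ω', (φ₀ (x, v x) + ∑ i : Fin 2, ∑ j : Fin 2,
      φm i j (x, v x) * fderiv ℝ v x (EuclideanSpace.single i 1) j) with ha
  have hamem : a ∈ S := ⟨φ₀, φm, hsm' (Sum.inl ()), fun i j => hsm' (Sum.inr (i,j)),
    hcs' (Sum.inl ()), fun i j => hcs' (Sum.inr (i,j)), htsΩ (Sum.inl ()),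
    fun i j => htsΩ (Sum.inr (i,j)), hconstraint, rfl⟩
  have haval : a = ∫ x in Ω', (inner ℝ (Φ x) (gvec v x) : ℝ) := by
    rw [ha]
    apply setIntegral_congr_fun hopen.measurableSet
    intro x hx
    have hone := hχ1 x hx
    simp only [hφ₀, hφm, hone, one_mul]
    rw [PiLp.inner_apply]
    simp only [RCLike.inner_apply, starRingEnd_apply, star_trivial]
    rw [Fintype.sum_sum_type, Fintype.sum_prod_type]
    simp [gvec]; ring
  calc (∫ x in Ω', Real.sqrt (1 + frobSq (fderiv ℝ v x)))
      ≤ a + ε := by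
        rw [haval, hIg]
        linarith
    _ ≤ sSup S + ε := by
        have := le_csSup hbddS hamem
        linarith
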